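/- arXiv:2406.12720 — 3 statements merged into one kernel-verified Lean document; each statement's English description precedes it below -/
import Mathlib

section
/- Let 0 < s < 1, max(2s-1,0) < α < min(1,2s), φ ∈ C¹_c(ℝ^N), w_α(x) = (x_N)₊^α, and a ∈ L^∞(𝕊^{N-1}) nonnegative. Define the bilinear form l[w_α,φ](x) = ∫_{ℝ^N} { [w_α(x+y)-w_α(x)][φ(x+y)-φ(x)] + [w_α(x-y)-w_α(x)][φ(x-y)-φ(x)] } |y|^{-(N+2s)} a(y/|y|) dy. Then x ↦ l[w_α,φ](x) is continuous on the closed upper half-space: for any sequence x_n ∈ ℝ^N_+ with x_n → x₀ ∈ closure(ℝ^N_+), l[w_α,φ](x_n) → l[w_α,φ](x₀). -/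
/-!
Both difference quotients are controlled uniformly in `x`: `w_α` is `α`-Hölder, so
`|w_α(x ± y) - w_α(x)| ≤ |y|^α`, and `φ` is Lipschitz and bounded, so
`|φ(x ± y) - φ(x)| ≤ C min(|y|, 1)`. Hence the integrand of `l[w_α, φ](x)` is dominated, for
every `x`, by a multiple of `min(|y|^(α+1-N-2s), |y|^(α-N-2s))`, which is integrable on `ℝ^N`
precisely because `2s - 1 < α < 2s`. Dominated convergence then makes `l[w_α, φ]` continuous
on all of `ℝ^N`, in particular up to the boundary of the half-space.
-/

open MeasureTheory Filter Set Module

lemma abs_rpow_sub_rpow_le_abs_sub_rpow {p a b : ℝ} (hp0 : 0 ≤ p) (hp1 : p ≤ 1)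
    (ha : 0 ≤ a) (hb : 0 ≤ b) : |a ^ p - b ^ p| ≤ |a - b| ^ p := by
  wlog hba : b ≤ a generalizing a b
  · rw [abs_sub_comm, abs_sub_comm a]
    exact this hb ha (le_of_not_ge hba)
  have hsub : a ^ p ≤ b ^ p + (a - b) ^ p := by
    simpa using Real.rpow_add_le_add_rpow hb (sub_nonneg.2 hba) hp0 hp1
  rw [abs_of_nonneg (sub_nonneg.2 (Real.rpow_le_rpow hb hba hp0)),
    abs_of_nonneg (sub_nonneg.2 hba)]
  linarith

lemma abs_max_zero_rpow_sub_le {p : ℝ} (hp0 : 0 ≤ p) (hp1 : p ≤ 1) (a b : ℝ) :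
    |max a 0 ^ p - max b 0 ^ p| ≤ |a - b| ^ p :=
  (abs_rpow_sub_rpow_le_abs_sub_rpow hp0 hp1 (le_max_right _ _) (le_max_right _ _)).trans
    (Real.rpow_le_rpow (abs_nonneg _) (abs_max_sub_max_le_abs _ _ _) hp0)

lemma EuclideanSpace.abs_max_apply_zero_rpow_sub_le {ι : Type*} [Fintype ι] {p : ℝ} (hp0 : 0 ≤ p)
    (hp1 : p ≤ 1) (i : ι) (u v : EuclideanSpace ℝ ι) :
    |max (u i) 0 ^ p - max (v i) 0 ^ p| ≤ ‖u - v‖ ^ p :=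
  (abs_max_zero_rpow_sub_le hp0 hp1 _ _).trans
    (Real.rpow_le_rpow (abs_nonneg _) (by simpa using PiLp.norm_apply_le (u - v) i) hp0)

lemma Real.rpow_mul_min_one_mul_rpow_le {r : ℝ} (hr : 0 ≤ r) (p q : ℝ) :
    r ^ p * min r 1 * r ^ q ≤ min (r ^ (p + 1 + q)) (r ^ (p + q)) := by
  rcases hr.eq_or_lt with rfl | hr
  · simp only [min_eq_left zero_le_one, mul_zero, zero_mul]
    exact le_min (Real.rpow_nonneg le_rfl _) (Real.rpow_nonneg le_rfl _)
  · refine le_of_eq ?_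
    calc r ^ p * min r 1 * r ^ q = min r 1 * (r ^ p * r ^ q) := by ring
      _ = min (r * (r ^ p * r ^ q)) (1 * (r ^ p * r ^ q)) :=
        min_mul_of_nonneg _ _ (by positivity)
      _ = min (r ^ (p + 1 + q)) (r ^ (p + q)) := by
        rw [Real.rpow_add hr, Real.rpow_add hr, Real.rpow_add hr, Real.rpow_one]
        congr 1 <;> ring

lemma ContDiff.exists_abs_sub_le_mul_min_norm_one {E : Type*} [NormedAddCommGroup E]
    [NormedSpace ℝ E] {φ : E → ℝ} (hφ : ContDiff ℝ 1 φ)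
    (hφc : HasCompactSupport φ) : ∃ C, 0 ≤ C ∧ ∀ u v, |φ u - φ v| ≤ C * min ‖u - v‖ 1 := by
  obtain ⟨L, hL⟩ := hφ.lipschitzWith_of_hasCompactSupport hφc one_ne_zero
  obtain ⟨M, hM⟩ := hφc.exists_bound_of_continuous hφ.continuous
  refine ⟨max (L : ℝ) (2 * M), le_max_of_le_left L.2, fun u v => ?_⟩
  rw [mul_min_of_nonneg (a := max (L : ℝ) (2 * M)) _ _ (le_max_of_le_left L.2), mul_one]
  refine le_min ?_ ?_
  · calc |φ u - φ v| ≤ L * ‖u - v‖ := by simpa [dist_eq_norm] using hL.dist_le_mul u v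
      _ ≤ max (L : ℝ) (2 * M) * ‖u - v‖ := by gcongr; exact le_max_left _ _
  · calc |φ u - φ v| ≤ ‖φ u‖ + ‖φ v‖ := by
          simpa only [Real.norm_eq_abs] using norm_sub_le (φ u) (φ v)
      _ ≤ 2 * M := by linarith [hM u, hM v]
      _ ≤ max (L : ℝ) (2 * M) := le_max_right _ _

section Integrability

variable {E : Type*} [NormedAddCommGroup E] [NormedSpace ℝ E] [FiniteDimensional ℝ E]
  [Nontrivial E] [MeasurableSpace E] [BorelSpace E] (μ : Measure E) [μ.IsAddHaarMeasure]

lemma integrable_min_norm_rpow {p q : ℝ} (hp : -(finrank ℝ E : ℝ) < p)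
    (hq : q < -(finrank ℝ E : ℝ)) :
    Integrable (fun y : E => min (‖y‖ ^ p) (‖y‖ ^ q)) μ := by
  rw [integrable_fun_norm_addHaar μ (f := fun r => min (r ^ p) (r ^ q)),
    ← Ioc_union_Ioi_eq_Ioi zero_le_one]
  have hd : ((finrank ℝ E - 1 : ℕ) : ℝ) = finrank ℝ E - 1 := by
    rw [Nat.cast_sub finrank_pos]; simp
  have hradial : ∀ r : ℝ, 0 < r →
      r ^ (finrank ℝ E - 1) • min (r ^ p) (r ^ q)
        = min (r ^ (finrank ℝ E - 1 + p : ℝ)) (r ^ (finrank ℝ E - 1 + q : ℝ)) := by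
    intro r hr
    rw [smul_eq_mul, ← Real.rpow_natCast, hd, mul_min_of_nonneg _ _ (by positivity),
      Real.rpow_add hr, Real.rpow_add hr]
  have hmeas : AEStronglyMeasurable
      (fun r : ℝ => r ^ (finrank ℝ E - 1) • min (r ^ p) (r ^ q)) volume := by fun_prop
  refine IntegrableOn.union ?_ ?_
  · have hint : IntegrableOn (fun r : ℝ => r ^ (finrank ℝ E - 1 + p : ℝ)) (Ioc 0 1) := by
      rw [integrableOn_Ioc_iff_integrableOn_Ioo,
        intervalIntegral.integrableOn_Ioo_rpow_iff zero_lt_one]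
      linarith
    refine hint.mono' hmeas.restrict ((ae_restrict_iff' measurableSet_Ioc).2 (.of_forall ?_))
    rintro r ⟨hr, -⟩
    rw [hradial r hr, Real.norm_eq_abs, abs_of_nonneg (by positivity)]
    exact min_le_left _ _
  · have hint : IntegrableOn (fun r : ℝ => r ^ (finrank ℝ E - 1 + q : ℝ)) (Ioi 1) :=
      integrableOn_Ioi_rpow_of_lt (by linarith) zero_lt_one
    refine hint.mono' hmeas.restrict ((ae_restrict_iff' measurableSet_Ioi).2 (.of_forall ?_))
    intro r (hr1 : 1 < r)
    have hr : 0 < r := zero_lt_one.trans hr1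
    rw [hradial r hr, Real.norm_eq_abs, abs_of_nonneg (by positivity)]
    exact min_le_right _ _

end Integrability

section NonlocalForm

variable {E : Type*} [NormedAddCommGroup E]

/-- The integrand of the paper's `l[w, φ](x)`, with `|y|^(-γ) K(y)` in place of the kernel
`|y|^(-(N+2s)) a(y/|y|)`. -/
noncomputable def nonlocalIntegrand (γ : ℝ) (K w φ : E → ℝ) (x y : E) : ℝ :=
  ((w (x + y) - w x) * (φ (x + y) - φ x) + (w (x - y) - w x) * (φ (x - y) - φ x)) *
    ‖y‖ ^ (-γ) * K y

noncomputable def nonlocalForm [MeasurableSpace E] (μ : Measure E) (γ : ℝ) (K w φ : E → ℝ)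
    (x : E) : ℝ :=
  ∫ y, nonlocalIntegrand γ K w φ x y ∂μ

variable {α γ C D : ℝ} {K w φ : E → ℝ}

lemma abs_nonlocalIntegrand_le (hC : 0 ≤ C) (hw : ∀ u v, |w u - w v| ≤ ‖u - v‖ ^ α)
    (hφ : ∀ u v, |φ u - φ v| ≤ C * min ‖u - v‖ 1) (hK : ∀ y, |K y| ≤ D) (x y : E) :
    |nonlocalIntegrand γ K w φ x y|
      ≤ 2 * C * D * min (‖y‖ ^ (α + 1 + -γ)) (‖y‖ ^ (α + -γ)) := by
  have hD : 0 ≤ D := (abs_nonneg _).trans (hK 0)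
  have hterm : ∀ z, ‖z - x‖ = ‖y‖ →
      |(w z - w x) * (φ z - φ x)| ≤ ‖y‖ ^ α * (C * min ‖y‖ 1) := fun z hz => by
    rw [abs_mul, ← hz]
    exact mul_le_mul (hw z x) (hφ z x) (abs_nonneg _) (by positivity)
  have hnum : |(w (x + y) - w x) * (φ (x + y) - φ x) + (w (x - y) - w x) * (φ (x - y) - φ x)|
      ≤ 2 * C * (‖y‖ ^ α * min ‖y‖ 1) := by
    have hadd := hterm (x + y) (by simp)
    have hsub := hterm (x - y) (by simp)
    linarith [abs_add_le ((w (x + y) - w x) * (φ (x + y) - φ x))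
      ((w (x - y) - w x) * (φ (x - y) - φ x))]
  calc |nonlocalIntegrand γ K w φ x y|
      ≤ 2 * C * (‖y‖ ^ α * min ‖y‖ 1) * ‖y‖ ^ (-γ) * D := by
        rw [nonlocalIntegrand, abs_mul, abs_mul, abs_of_nonneg (by positivity : 0 ≤ ‖y‖ ^ (-γ))]
        gcongr
        exact hK y
    _ = 2 * C * D * (‖y‖ ^ α * min ‖y‖ 1 * ‖y‖ ^ (-γ)) := by ring
    _ ≤ 2 * C * D * min (‖y‖ ^ (α + 1 + -γ)) (‖y‖ ^ (α + -γ)) := by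
        gcongr
        exact Real.rpow_mul_min_one_mul_rpow_le (norm_nonneg y) α (-γ)

variable [NormedSpace ℝ E] [FiniteDimensional ℝ E] [Nontrivial E] [MeasurableSpace E]
  [BorelSpace E] (μ : Measure E) [μ.IsAddHaarMeasure]

theorem continuous_nonlocalForm (hγ₀ : -(finrank ℝ E : ℝ) < α + 1 - γ)
    (hγ₁ : α - γ < -(finrank ℝ E : ℝ)) (hC : 0 ≤ C)
    (hw_cont : Continuous w) (hw : ∀ u v, |w u - w v| ≤ ‖u - v‖ ^ α)
    (hφ_cont : Continuous φ) (hφ : ∀ u v, |φ u - φ v| ≤ C * min ‖u - v‖ 1)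
    (hK_meas : Measurable K) (hK : ∀ y, |K y| ≤ D) :
    Continuous (nonlocalForm μ γ K w φ) := by
  refine continuous_of_dominated (fun x => ?_)
    (fun x => .of_forall (abs_nonlocalIntegrand_le hC hw hφ hK x))
    ((integrable_min_norm_rpow μ (by linarith) (by linarith)).const_mul _)
    (.of_forall fun y => ?_)
  · apply Measurable.aestronglyMeasurable
    unfold nonlocalIntegrand
    fun_prop
  · unfold nonlocalIntegrand
    fun_prop

end NonlocalForm

theorem stmt11_general (n : ℕ) (s α : ℝ)
    (hα1 : max (2 * s - 1) 0 < α) (hα2 : α < min 1 (2 * s))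
    (a : EuclideanSpace ℝ (Fin (n + 1)) → ℝ) (ha : Measurable a)
    (hanonneg : ∀ θ, 0 ≤ a θ) (D : ℝ) (habd : ∀ θ, a θ ≤ D)
    (φ : EuclideanSpace ℝ (Fin (n + 1)) → ℝ) (hφ : ContDiff ℝ 1 φ)
    (hφc : HasCompactSupport φ)
    (w : EuclideanSpace ℝ (Fin (n + 1)) → ℝ)
    (hw : ∀ x, w x = max (x (Fin.last n)) 0 ^ α)
    (l : EuclideanSpace ℝ (Fin (n + 1)) → ℝ)
    (hl : ∀ x, l x = ∫ y : EuclideanSpace ℝ (Fin (n + 1)),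
      ((w (x + y) - w x) * (φ (x + y) - φ x) + (w (x - y) - w x) * (φ (x - y) - φ x)) *
        ‖y‖ ^ (-((n + 1 : ℝ) + 2 * s)) * a (‖y‖⁻¹ • y))
    (x₀ : EuclideanSpace ℝ (Fin (n + 1)))
    (xseq : ℕ → EuclideanSpace ℝ (Fin (n + 1)))
    (hconv : Tendsto xseq atTop (nhds x₀)) :
    Tendsto (fun k => l (xseq k)) atTop (nhds (l x₀)) := by
  obtain ⟨hα_lo, hα_pos⟩ := max_lt_iff.1 hα1
  obtain ⟨hα_one, hα_hi⟩ := lt_min_iff.1 hα2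
  have hdim : (finrank ℝ (EuclideanSpace ℝ (Fin (n + 1))) : ℝ) = n + 1 := by simp
  have hw_eq : w = fun x => max (x (Fin.last n)) 0 ^ α := funext hw
  have hw_cont : Continuous w := by
    rw [hw_eq]
    exact ((EuclideanSpace.proj (Fin.last n)).continuous.max continuous_const).rpow_const
      fun _ => Or.inr hα_pos.le
  have hw_holder : ∀ u v, |w u - w v| ≤ ‖u - v‖ ^ α := by
    rw [hw_eq]
    exact EuclideanSpace.abs_max_apply_zero_rpow_sub_le hα_pos.le hα_one.le _
  obtain ⟨C, hC, hφC⟩ := hφ.exists_abs_sub_le_mul_min_norm_one hφc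
  have hl_eq : l = nonlocalForm volume ((n + 1 : ℝ) + 2 * s) (fun y => a (‖y‖⁻¹ • y)) w φ :=
    funext hl
  have hl_cont : Continuous l :=
    hl_eq ▸ continuous_nonlocalForm volume (by rw [hdim]; linarith) (by rw [hdim]; linarith) hC
      hw_cont hw_holder hφ.continuous hφC (by fun_prop)
      fun _ => (abs_of_nonneg (hanonneg _)).trans_le (habd _)
  exact (hl_cont.tendsto x₀).comp hconv

/-- Continuity up to the boundary of the bilinear form
`l[w_α, φ](x) = ∫ { [w_α(x+y)-w_α(x)][φ(x+y)-φ(x)] + [w_α(x-y)-w_α(x)][φ(x-y)-φ(x)] }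
  |y|^{-(N+2s)} a(y/|y|) dy`, where `w_α(x) = (x_N)₊^α`. -/
theorem stmt11 (n : ℕ) (s α : ℝ) (hs0 : 0 < s) (hs1 : s < 1)
    (hα1 : max (2 * s - 1) 0 < α) (hα2 : α < min 1 (2 * s))
    (a : EuclideanSpace ℝ (Fin (n + 1)) → ℝ) (ha : Measurable a)
    (hanonneg : ∀ θ, 0 ≤ a θ) (D : ℝ) (habd : ∀ θ, a θ ≤ D)
    (φ : EuclideanSpace ℝ (Fin (n + 1)) → ℝ) (hφ : ContDiff ℝ 1 φ)
    (hφc : HasCompactSupport φ)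
    (w : EuclideanSpace ℝ (Fin (n + 1)) → ℝ)
    (hw : ∀ x, w x = max (x (Fin.last n)) 0 ^ α)
    (l : EuclideanSpace ℝ (Fin (n + 1)) → ℝ)
    (hl : ∀ x, l x = ∫ y : EuclideanSpace ℝ (Fin (n + 1)),
      ((w (x + y) - w x) * (φ (x + y) - φ x) + (w (x - y) - w x) * (φ (x - y) - φ x)) *
        ‖y‖ ^ (-((n + 1 : ℝ) + 2 * s)) * a (‖y‖⁻¹ • y))
    (x₀ : EuclideanSpace ℝ (Fin (n + 1))) (hx₀ : 0 ≤ x₀ (Fin.last n))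
    (xseq : ℕ → EuclideanSpace ℝ (Fin (n + 1)))
    (hxseq : ∀ k, 0 < xseq k (Fin.last n))
    (hconv : Tendsto xseq atTop (nhds x₀)) :
    Tendsto (fun k => l (xseq k)) atTop (nhds (l x₀)) :=
  stmt11_general n s α hα1 hα2 a ha hanonneg D habd φ hφ hφc w hw l hl x₀ xseq hconv
end

section
/- Let N ≥ 2, s ∈ (0,1), and let p satisfy (N+s)/(N-s) < p < N/(N-2s). Set α = (N - (N-2s)p)/(p-1). Then 0 < α < s, and the function u(x) = ε (x_N)₊^α / |x|^{N-2s+2α} with 0 < ε ≤ (-C_α)^{1/(p-1)}, where C_α < 0 is the constant such that (-Δ)^s w_α = -C_α x_N^{α-2s} for w_α = (x_N)₊^α, satisfies (-Δ)^s u ≥ u^p pointwise in ℝ^N_+ and u = 0 in ℝ^N_-. -/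
open MeasureTheory

lemma key12 (s p ε Cα α N t r : ℝ)
    (hp : 1 < p) (hα0 : 0 < α)
    (hN : 2 * s < N)
    (hε0 : 0 < ε) (hε' : ε ^ (p - 1) ≤ -Cα)
    (e1 : α * p = (α - 2 * s) + (N - 2 * s + 2 * α) * (p - 1))
    (ht : 0 < t) (htr : t ≤ r) :
    (ε * t ^ α / r ^ (N - 2 * s + 2 * α)) ^ p ≤
      ε * (r ^ (-(N + 2 * s)) * (-Cα * (r ^ (-2 : ℝ) * t) ^ (α - 2 * s))) := by
  have hr : 0 < r := lt_of_lt_of_le ht htr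
  set β := N - 2 * s + 2 * α with hβdef
  have hβ : 0 < β := by simp only [hβdef]; linarith
  have hCα' : 0 < -Cα := lt_of_lt_of_le (Real.rpow_pos_of_pos hε0 _) hε'
  have hp1 : 0 < p - 1 := by linarith
  have r2 : (r ^ (-2 : ℝ) * t) ^ (α - 2 * s) = r ^ ((-2) * (α - 2 * s)) * t ^ (α - 2 * s) := by
    rw [Real.mul_rpow (Real.rpow_nonneg hr.le _) ht.le, ← Real.rpow_mul hr.le]
  have r3 : r ^ (-(N + 2 * s)) * r ^ ((-2) * (α - 2 * s)) = r ^ (-β) := by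
    rw [← Real.rpow_add hr, hβdef]; ring_nf
  have rhs_eq : ε * (r ^ (-(N + 2 * s)) * (-Cα * (r ^ (-2 : ℝ) * t) ^ (α - 2 * s))) =
      ε * (-Cα) * t ^ (α - 2 * s) * r ^ (-β) := by
    rw [r2, ← r3]; ring
  have lhs_eq : (ε * t ^ α / r ^ β) ^ p =
      ε * ε ^ (p - 1) * (t ^ (α - 2 * s) * t ^ (β * (p - 1))) /
        (r ^ β * r ^ (β * (p - 1))) := by
    rw [Real.div_rpow (by positivity) (by positivity),
      Real.mul_rpow hε0.le (Real.rpow_nonneg ht.le _),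
      ← Real.rpow_mul ht.le, ← Real.rpow_mul hr.le, e1, Real.rpow_add ht,
      show β * p = β + β * (p - 1) by ring, Real.rpow_add hr,
      show ε ^ p = ε ^ (1 + (p - 1)) by ring_nf, Real.rpow_add hε0, Real.rpow_one]
  rw [lhs_eq, rhs_eq, Real.rpow_neg hr.le, div_le_iff₀ (by positivity)]
  have hrβ : (0:ℝ) < r ^ β := Real.rpow_pos_of_pos hr _
  rw [show ε * (-Cα) * t ^ (α - 2 * s) * (r ^ β)⁻¹ * (r ^ β * r ^ (β * (p - 1))) =
      ε * (-Cα) * t ^ (α - 2 * s) * r ^ (β * (p - 1)) * ((r ^ β)⁻¹ * r ^ β) by ring,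
    inv_mul_cancel₀ (ne_of_gt hrβ), mul_one]
  have h2 : t ^ (β * (p - 1)) ≤ r ^ (β * (p - 1)) :=
    Real.rpow_le_rpow ht.le htr (by positivity)
  have h3 : ε ^ (p - 1) * t ^ (β * (p - 1)) ≤ (-Cα) * r ^ (β * (p - 1)) :=
    mul_le_mul hε' h2 (Real.rpow_nonneg ht.le _) hCα'.le
  have h4 := mul_le_mul_of_nonneg_left h3
    (show (0:ℝ) ≤ ε * t ^ (α - 2 * s) by positivity)
  nlinarith [h4]

/-- Optimality construction: for `(N+s)/(N-s) < p < N/(N-2s)` and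
`α = (N-(N-2s)p)/(p-1)` one has `0 < α < s`, and the Kelvin-transformed barrier
`u(x) = ε (x_N)₊^α / |x|^{N-2s+2α}` is a positive supersolution of `(-Δ)^s u ≥ u^p`
in the half-space, vanishing on the lower half-space. Here the fractional Laplacian is
the second-difference kernel integral `flap u x = -∫ [u(x+y)+u(x-y)-2u(x)]|y|^{-(N+2s)} dy`,
`C_α < 0` is the constant with `flap w_α = -C_α x_N^{α-2s}` on `{x_N > 0}`, and the Kelvin
transform identity for `w_α` is assumed. -/
theorem stmt12 (n : ℕ) (hn : 1 ≤ n) (s p ε Cα : ℝ) (hs0 : 0 < s) (hs1 : s < 1)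
    (hp1 : ((n + 1 : ℝ) + s) / ((n + 1 : ℝ) - s) < p)
    (hp2 : p < (n + 1 : ℝ) / ((n + 1 : ℝ) - 2 * s))
    (α : ℝ) (hαdef : α = ((n + 1 : ℝ) - ((n + 1 : ℝ) - 2 * s) * p) / (p - 1))
    (hCα : Cα < 0)
    (hε0 : 0 < ε) (hε : ε ≤ (-Cα) ^ (1 / (p - 1)))
    (flap : (EuclideanSpace ℝ (Fin (n + 1)) → ℝ) → EuclideanSpace ℝ (Fin (n + 1)) → ℝ)
    (hflap : ∀ w z, flap w z =
      -∫ y : EuclideanSpace ℝ (Fin (n + 1)),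
        (w (z + y) + w (z - y) - 2 * w z) * ‖y‖ ^ (-((n + 1 : ℝ) + 2 * s)))
    (hbarrier : ∀ x : EuclideanSpace ℝ (Fin (n + 1)), 0 < x (Fin.last n) →
      flap (fun z => max (z (Fin.last n)) 0 ^ α) x = -Cα * x (Fin.last n) ^ (α - 2 * s))
    (hKelvin : ∀ x : EuclideanSpace ℝ (Fin (n + 1)), x ≠ 0 →
      flap (fun z => ‖z‖ ^ (2 * s - (n + 1 : ℝ)) *
          max ((‖z‖ ^ (-2 : ℝ) • z) (Fin.last n)) 0 ^ α) x =
        ‖x‖ ^ (-((n + 1 : ℝ) + 2 * s)) *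
          flap (fun z => max (z (Fin.last n)) 0 ^ α) (‖x‖ ^ (-2 : ℝ) • x))
    (u : EuclideanSpace ℝ (Fin (n + 1)) → ℝ)
    (hu : ∀ x, u x = ε * max (x (Fin.last n)) 0 ^ α / ‖x‖ ^ ((n + 1 : ℝ) - 2 * s + 2 * α)) :
    (0 < α ∧ α < s) ∧
      (∀ x : EuclideanSpace ℝ (Fin (n + 1)), 0 < x (Fin.last n) → u x ^ p ≤ flap u x) ∧
      (∀ x : EuclideanSpace ℝ (Fin (n + 1)), x (Fin.last n) < 0 → u x = 0) := by
  set N : ℝ := (n + 1 : ℝ) with hNdef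
  have hN2 : (2:ℝ) ≤ N := by
    have : (1:ℝ) ≤ (n:ℝ) := by exact_mod_cast hn
    simp only [hNdef]; linarith
  have hNs : 0 < N - 2 * s := by linarith
  have hNs' : 0 < N - s := by linarith
  have hpgt1 : 1 < p := by
    have h1 : (1:ℝ) < (N + s) / (N - s) := (one_lt_div hNs').mpr (by linarith)
    linarith
  have hp1' : 0 < p - 1 := by linarith
  have hnum : 0 < N - (N - 2 * s) * p := by
    have := (lt_div_iff₀ hNs).mp hp2
    linarith
  have hα0 : 0 < α := by rw [hαdef]; positivity
  have hα' : α * (p - 1) = N - (N - 2 * s) * p := by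
    rw [hαdef]; field_simp
  have hαs : α < s := by
    have h1 : N + s < p * (N - s) := (div_lt_iff₀ hNs').mp hp1
    nlinarith [hα']
  have e1 : α * p = (α - 2 * s) + (N - 2 * s + 2 * α) * (p - 1) := by
    linear_combination (-1 : ℝ) * hα'
  have hε' : ε ^ (p - 1) ≤ -Cα := by
    have hCα' : (0:ℝ) < -Cα := by linarith
    calc ε ^ (p - 1) ≤ ((-Cα) ^ (1 / (p - 1))) ^ (p - 1) :=
          Real.rpow_le_rpow hε0.le hε hp1'.le
      _ = (-Cα) ^ (1 / (p - 1) * (p - 1)) := (Real.rpow_mul hCα'.le _ _).symm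
      _ = -Cα := by rw [one_div_mul_cancel (ne_of_gt hp1'), Real.rpow_one]
  -- u equals ε times the Kelvin-transformed barrier
  have huv : ∀ z : EuclideanSpace ℝ (Fin (n + 1)),
      u z = ε * (‖z‖ ^ (2 * s - N) *
        max ((‖z‖ ^ (-2 : ℝ) • z) (Fin.last n)) 0 ^ α) := by
    intro z
    rcases eq_or_ne z 0 with rfl | hz
    · simp [hu, Real.zero_rpow (ne_of_gt hα0), Real.zero_rpow (show 2 * s - N ≠ 0 by linarith)]
    · have hr : 0 < ‖z‖ := norm_pos_iff.mpr hz
      have hsmul : (‖z‖ ^ (-2 : ℝ) • z) (Fin.last n) = ‖z‖ ^ (-2 : ℝ) * z (Fin.last n) := by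
        simp [PiLp.smul_apply, smul_eq_mul]
      have hc : (0:ℝ) ≤ ‖z‖ ^ (-2 : ℝ) := Real.rpow_nonneg hr.le _
      have hmax : max (‖z‖ ^ (-2 : ℝ) * z (Fin.last n)) 0 =
          ‖z‖ ^ (-2 : ℝ) * max (z (Fin.last n)) 0 := by
        rw [show (0:ℝ) = ‖z‖ ^ (-2 : ℝ) * 0 by ring, ← mul_max_of_nonneg _ _ hc, mul_zero]
      have hcomb : ‖z‖ ^ (2 * s - N) * ‖z‖ ^ ((-2) * α) =
          (‖z‖ ^ (N - 2 * s + 2 * α))⁻¹ := by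
        rw [← Real.rpow_add hr, ← Real.rpow_neg hr.le]
        ring_nf
      rw [hu, hsmul, hmax, Real.mul_rpow hc (le_max_right _ _), ← Real.rpow_mul hr.le,
        div_eq_mul_inv, ← hcomb]
      ring
  refine ⟨⟨hα0, hαs⟩, ?_, ?_⟩
  · intro x hx
    have hxne : x ≠ 0 := by
      rintro rfl
      simp at hx
    have hr : 0 < ‖x‖ := norm_pos_iff.mpr hxne
    have hsmul : (‖x‖ ^ (-2 : ℝ) • x) (Fin.last n) = ‖x‖ ^ (-2 : ℝ) * x (Fin.last n) := by
      simp [PiLp.smul_apply, smul_eq_mul]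
    have hxstar : 0 < (‖x‖ ^ (-2 : ℝ) • x) (Fin.last n) := by
      rw [hsmul]
      exact mul_pos (Real.rpow_pos_of_pos hr _) hx
    have hlin : flap u x = ε * flap (fun z => ‖z‖ ^ (2 * s - N) *
        max ((‖z‖ ^ (-2 : ℝ) • z) (Fin.last n)) 0 ^ α) x := by
      rw [hflap, hflap, mul_neg, ← MeasureTheory.integral_const_mul]
      congr 1
      congr 1
      funext y
      simp only [huv]
      ring
    rw [hlin, hKelvin x hxne, hbarrier _ hxstar, hsmul, hu x, max_eq_left hx.le]
    have htr : x (Fin.last n) ≤ ‖x‖ := by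
      have hsum := Finset.single_le_sum (f := fun i => ‖x i‖ ^ 2)
        (fun i _ => sq_nonneg _) (Finset.mem_univ (Fin.last n))
      calc x (Fin.last n) ≤ |x (Fin.last n)| := le_abs_self _
        _ = ‖x (Fin.last n)‖ := (Real.norm_eq_abs _).symm
        _ = Real.sqrt (‖x (Fin.last n)‖ ^ 2) := (Real.sqrt_sq (norm_nonneg _)).symm
        _ ≤ Real.sqrt (∑ i, ‖x i‖ ^ 2) := Real.sqrt_le_sqrt hsum
        _ = ‖x‖ := (EuclideanSpace.norm_eq x).symm
    exact key12 s p ε Cα α N (x (Fin.last n)) ‖x‖ hpgt1 hα0 (by linarith) hε0 hε' e1 hx htr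
  · intro x hx
    rw [hu, max_eq_right hx.le, Real.zero_rpow (ne_of_gt hα0), mul_zero, zero_div]
end

section
/- Let ν₀ ∈ 𝕊^{N-1} and τ₀ ∈ (0,1]. Then there exists γ ∈ (0,1) such that for every x ∈ ∂B₁((1-γ)e_N) with x_N ≥ 0, the set Σ_{ν₀,τ₀}(x) ∩ B₁((1-γ)e_N) ∩ ℝ^N_+ has positive Lebesgue measure. -/
open MeasureTheory Filter Topology
open scoped RealInnerProductSpace

/-!
Move from `x` along a ray `x + t • v`. The point enters the ball for small `t > 0` once `v` makes
an acute angle with the inward normal `w = c - x`, and it stays in the upper half-space when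
`x_N > 0`, or when `x_N = 0` and `v_N > 0`. On the rim `x_N = 0` one has `⟪w, e_N⟫ = 1 - γ`, so
for `γ ≪ τ₀²` tilting `±ν₀` slightly towards `w + e_N` meets both constraints while staying in
the open cone; the open set of points reached this way has positive measure.
-/

section InnerProductSpace

variable {E : Type*} [NormedAddCommGroup E] [InnerProductSpace ℝ E]

theorem exists_mem_cone_inner_pos {ν a b : E} (hν : ‖ν‖ = 1) (ha : ‖a‖ = 1) (hb : ‖b‖ = 1)
    {τ : ℝ} (hτ0 : 0 < τ) (hτ1 : τ ≤ 1) (hab : 1 - τ ^ 2 / 8 < ⟪a, b⟫) :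
    ∃ v : E, (1 - τ) * ‖v‖ < |⟪v, ν⟫| ∧ 0 < ⟪a, v⟫ ∧ 0 < ⟪b, v⟫ := by
  wlog hνab : 0 ≤ ⟪ν, a + b⟫ generalizing ν
  · obtain ⟨v, hv⟩ := this (ν := -ν) (by rwa [norm_neg]) (by rw [inner_neg_left]; linarith)
    exact ⟨v, by simpa only [inner_neg_right, abs_neg] using hv⟩
  have hdiff : |⟪ν, a - b⟫| < τ / 2 := by
    have hsq : ‖a - b‖ ^ 2 < (τ / 2) ^ 2 := by
      rw [norm_sub_sq_real, ha, hb]; linarith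
    calc |⟪ν, a - b⟫| ≤ ‖ν‖ * ‖a - b‖ := abs_real_inner_le_norm _ _
      _ < τ / 2 := by rw [hν, one_mul]; exact lt_of_pow_lt_pow_left₀ 2 (by positivity) hsq
  refine ⟨ν + (τ / 4) • (a + b), ?_, ?_, ?_⟩
  · have hnorm : ‖ν + (τ / 4) • (a + b)‖ ≤ 1 + τ / 2 := calc
      _ ≤ ‖ν‖ + τ / 4 * (‖a‖ + ‖b‖) := by
        grw [norm_add_le, norm_smul, Real.norm_of_nonneg (by positivity), norm_add_le]
      _ = 1 + τ / 2 := by rw [hν, ha, hb]; ring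
    have hinner : 1 ≤ ⟪ν + (τ / 4) • (a + b), ν⟫ := by
      rw [inner_add_left, real_inner_self_eq_norm_sq, hν, real_inner_smul_left, real_inner_comm]
      nlinarith
    calc (1 - τ) * ‖ν + (τ / 4) • (a + b)‖ ≤ (1 - τ) * (1 + τ / 2) := by
          gcongr
      _ < 1 := by nlinarith
      _ ≤ _ := hinner.trans (le_abs_self _)
  all_goals
    simp only [inner_add_right, inner_sub_right, real_inner_smul_right,
      real_inner_self_eq_norm_sq, ha, hb, real_inner_comm a b, real_inner_comm ν] at hνab hdiff ⊢
    rw [abs_lt] at hdiff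
    nlinarith

theorem measure_cone_inter_pos [MeasurableSpace E] (μ : Measure E)
    [μ.IsOpenPosMeasure] {U : Set E} (hU : IsOpen U) {x y ν : E} {τ : ℝ}
    (hy : (1 - τ) * ‖y - x‖ < |⟪y - x, ν⟫|) (hyU : y ∈ U) :
    0 < μ ({y | (1 - τ) * ‖y - x‖ ≤ |⟪y - x, ν⟫|} ∩ U) := by
  have hopen : IsOpen ({y | (1 - τ) * ‖y - x‖ < |⟪y - x, ν⟫|} ∩ U) :=
    (isOpen_lt (by fun_prop) (by fun_prop)).inter hU
  exact (hopen.measure_pos μ ⟨y, hy, hyU⟩).trans_le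
    (measure_mono (Set.inter_subset_inter_left _ (Set.ofPred_subset_ofPred.2 fun _ => le_of_lt)))

theorem cone_add_smul {x v ν : E} {τ t : ℝ} (ht : 0 < t) (hv : (1 - τ) * ‖v‖ < |⟪v, ν⟫|) :
    (1 - τ) * ‖x + t • v - x‖ < |⟪x + t • v - x, ν⟫| := by
  rw [add_sub_cancel_left, norm_smul, real_inner_smul_left, abs_mul, Real.norm_eq_abs,
    abs_of_pos ht, mul_left_comm]
  exact mul_lt_mul_of_pos_left hv ht

theorem eventually_add_smul_mem_ball {x c v : E} {r : ℝ} (hx : x ∈ Metric.sphere c r)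
    (hv : 0 < ⟪c - x, v⟫) : ∀ᶠ t in 𝓝[>] (0 : ℝ), x + t • v ∈ Metric.ball c r := by
  have hsmall : ∀ᶠ t in 𝓝 (0 : ℝ), t * ‖v‖ ^ 2 < 2 * ⟪c - x, v⟫ :=
    (continuous_id.mul continuous_const).continuousAt.eventually_lt continuousAt_const
      (by simpa using hv)
  filter_upwards [eventually_nhdsWithin_of_eventually_nhds hsmall, self_mem_nhdsWithin]
    with t htv (ht : 0 < t)
  rw [mem_sphere_iff_norm] at hx
  have hsq : ‖x + t • v - c‖ ^ 2 = r ^ 2 - t * (2 * ⟪c - x, v⟫ - t * ‖v‖ ^ 2) := by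
    rw [show x + t • v - c = t • v - (c - x) by abel, norm_sub_sq_real, norm_smul,
      real_inner_smul_left, real_inner_comm, norm_sub_rev, hx, Real.norm_eq_abs, mul_pow, sq_abs]
    ring
  rw [Metric.mem_ball, dist_eq_norm]
  refine lt_of_pow_lt_pow_left₀ 2 (hx ▸ norm_nonneg _) ?_
  rw [hsq]
  nlinarith

end InnerProductSpace

theorem exists_cone_direction_into_upper_ball {n : ℕ} {ν : EuclideanSpace ℝ (Fin (n + 1))}
    (hν : ‖ν‖ = 1) {τ γ : ℝ} (hτ0 : 0 < τ) (hτ1 : τ ≤ 1) (hγ : γ < τ ^ 2 / 8)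
    {x : EuclideanSpace ℝ (Fin (n + 1))}
    (hx : x ∈ Metric.sphere ((1 - γ) • EuclideanSpace.single (Fin.last n) (1 : ℝ)) 1)
    (hxN : 0 ≤ x (Fin.last n)) :
    ∃ v, (1 - τ) * ‖v‖ < |⟪v, ν⟫| ∧
      0 < ⟪(1 - γ) • EuclideanSpace.single (Fin.last n) (1 : ℝ) - x, v⟫ ∧
      ∀ᶠ t in 𝓝[>] (0 : ℝ), 0 < (x + t • v) (Fin.last n) := by
  set e := EuclideanSpace.single (Fin.last n) (1 : ℝ)
  have he : ‖e‖ = 1 := by simp [e]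
  have hinner_e (z : EuclideanSpace ℝ (Fin (n + 1))) : ⟪e, z⟫ = z (Fin.last n) := by
    simp [e, EuclideanSpace.inner_single_left]
  have hw : ‖(1 - γ) • e - x‖ = 1 := by rw [norm_sub_rev]; exact mem_sphere_iff_norm.1 hx
  have hcoord (t : ℝ) (v : EuclideanSpace ℝ (Fin (n + 1))) :
      (x + t • v) (Fin.last n) = x (Fin.last n) + t * v (Fin.last n) := by simp
  rcases hxN.eq_or_lt with hx0 | hxpos
  · have hwe : 1 - τ ^ 2 / 8 < ⟪(1 - γ) • e - x, e⟫ := by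
      rw [real_inner_comm, inner_sub_right, real_inner_smul_right, real_inner_self_eq_norm_sq,
        he, hinner_e, ← hx0]
      linarith
    obtain ⟨v, hcone, hin, hup⟩ := exists_mem_cone_inner_pos hν hw he hτ0 hτ1 hwe
    refine ⟨v, hcone, hin, eventually_nhdsWithin_of_forall fun t (ht : 0 < t) => ?_⟩
    rw [hcoord, ← hx0, zero_add, ← hinner_e]
    positivity
  · have hww : 1 - τ ^ 2 / 8 < ⟪(1 - γ) • e - x, (1 - γ) • e - x⟫ := by
      rw [real_inner_self_eq_norm_sq, hw]; nlinarith
    obtain ⟨v, hcone, hin, -⟩ := exists_mem_cone_inner_pos hν hw hw hτ0 hτ1 hww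
    refine ⟨v, hcone, hin, eventually_nhdsWithin_of_eventually_nhds ?_⟩
    simp only [hcoord]
    exact continuousAt_const.eventually_lt (by fun_prop) (by simpa using hxpos)

theorem stmt17_general (n : ℕ)
    (ν₀ : EuclideanSpace ℝ (Fin (n + 1))) (hν₀ : ‖ν₀‖ = 1)
    (τ₀ : ℝ) (hτ₀0 : 0 < τ₀) (hτ₀1 : τ₀ ≤ 1) :
    ∃ γ : ℝ, 0 < γ ∧ γ < 1 ∧
      ∀ x : EuclideanSpace ℝ (Fin (n + 1)),
        x ∈ Metric.sphere ((1 - γ) • EuclideanSpace.single (Fin.last n) (1 : ℝ)) 1 →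
        0 ≤ x (Fin.last n) →
        0 < volume ({y : EuclideanSpace ℝ (Fin (n + 1)) |
            (1 - τ₀) * ‖y - x‖ ≤ abs ⟪y - x, ν₀⟫} ∩
          Metric.ball ((1 - γ) • EuclideanSpace.single (Fin.last n) (1 : ℝ)) 1 ∩
          {y | 0 < y (Fin.last n)}) := by
  refine ⟨τ₀ ^ 2 / 16, by positivity, by nlinarith, fun x hx hxN => ?_⟩
  obtain ⟨v, hcone, hin, hup⟩ :=
    exists_cone_direction_into_upper_ball hν₀ hτ₀0 hτ₀1 (by nlinarith) hx hxN
  obtain ⟨t, ⟨hball, hyN⟩, ht⟩ :=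
    ((eventually_add_smul_mem_ball hx hin).and hup |>.and self_mem_nhdsWithin).exists
  rw [Set.inter_assoc]
  exact measure_cone_inter_pos volume
    (Metric.isOpen_ball.inter (isOpen_lt continuous_const (by fun_prop)))
    (cone_add_smul ht hcone) ⟨hball, hyN⟩

/-- Geometric lemma: the center of the unit ball tangent from inside to the half-space
can be lowered to `(1-γ)e_N` so that from every point of the shifted sphere with
`x_N ≥ 0`, the cone `Σ_{ν₀,τ₀}(x)` meets the shifted ball inside the upper half-space in
a set of positive measure. -/
theorem stmt17 (n : ℕ) (hn : 1 ≤ n)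
    (ν₀ : EuclideanSpace ℝ (Fin (n + 1))) (hν₀ : ‖ν₀‖ = 1)
    (τ₀ : ℝ) (hτ₀0 : 0 < τ₀) (hτ₀1 : τ₀ ≤ 1) :
    ∃ γ : ℝ, 0 < γ ∧ γ < 1 ∧
      ∀ x : EuclideanSpace ℝ (Fin (n + 1)),
        x ∈ Metric.sphere ((1 - γ) • EuclideanSpace.single (Fin.last n) (1 : ℝ)) 1 →
        0 ≤ x (Fin.last n) →
        0 < volume ({y : EuclideanSpace ℝ (Fin (n + 1)) |
            (1 - τ₀) * ‖y - x‖ ≤ abs ⟪y - x, ν₀⟫} ∩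
          Metric.ball ((1 - γ) • EuclideanSpace.single (Fin.last n) (1 : ℝ)) 1 ∩
          {y | 0 < y (Fin.last n)}) :=
  stmt17_general n ν₀ hν₀ τ₀ hτ₀0 hτ₀1
end
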